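/- arXiv:1801.06884 — 8 statements merged into one kernel-verified Lean document; each statement's English description precedes it below -/
import Mathlib

section
/- Let C be a bounded self-adjoint operator on a complex Hilbert space and T = A + iB (Cartesian decomposition) a bounded operator with T² = C. If σ(A) ∩ σ(-A) = ∅, then T is self-adjoint and invertible (in fact T = A). -/
/-!
Writing `T* = A - iB`, the identity `T*² = C* = C = T²` forces `AB + BA = 0`, i.e. `B` intertwines
`-A` with `A`. Intertwining passes to the continuous functional calculus, and since `σ(A)` and
`σ(-A)` are disjoint compact sets, an Urysohn function `f` with `f = 1` on `σ(A)` and `f = 0` on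
`σ(-A)` gives `B = f(A) B = B f(-A) = 0`. Hence `T = A`, which is invertible because `0 ∈ σ(A)`
would also give `0 ∈ σ(-A)`.
-/

section SemiconjBy

variable {A : Type*} [Ring A] [StarRing A] [Algebra ℝ A] [TopologicalSpace A]
  [ContinuousFunctionalCalculus ℝ A IsSelfAdjoint]

noncomputable def cfcHomOfSubset {a : A} (ha : IsSelfAdjoint a) {K : Set ℝ}
    (hK : spectrum ℝ a ⊆ K) : C(K, ℝ) →⋆ₐ[ℝ] A :=
  (cfcHom ha).comp
    (ContinuousMap.compStarAlgHom' ℝ ℝ ⟨Set.inclusion hK, continuous_inclusion hK⟩)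

lemma continuous_cfcHomOfSubset {a : A} (ha : IsSelfAdjoint a) {K : Set ℝ}
    (hK : spectrum ℝ a ⊆ K) : Continuous (cfcHomOfSubset ha hK) :=
  (cfcHom_continuous ha).comp (ContinuousMap.continuous_precomp _)

lemma cfcHomOfSubset_restrict {a : A} (ha : IsSelfAdjoint a) {K : Set ℝ}
    (hK : spectrum ℝ a ⊆ K) {f : ℝ → ℝ} (hf : ContinuousOn f K) :
    cfcHomOfSubset ha hK ⟨_, hf.domRestrict⟩ = cfc f a := by
  rw [cfc_apply f a ha (hf.mono hK)]
  rfl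

lemma cfcHomOfSubset_id {a : A} (ha : IsSelfAdjoint a) {K : Set ℝ}
    (hK : spectrum ℝ a ⊆ K) : cfcHomOfSubset ha hK ((ContinuousMap.id ℝ).restrict K) = a :=
  cfcHom_id ha

theorem SemiconjBy.cfc_real [IsSemitopologicalRing A] [T2Space A] {a b x : A}
    (ha : IsSelfAdjoint a) (hb : IsSelfAdjoint b) (hx : SemiconjBy x b a) {f : ℝ → ℝ}
    (hf : ContinuousOn f (spectrum ℝ a ∪ spectrum ℝ b)) :
    SemiconjBy x (cfc f b) (cfc f a) := by
  -- Run the Stone–Weierstrass induction on a compact set carrying the calculi of `a` and `b`.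
  set K := spectrum ℝ a ∪ spectrum ℝ b
  have : CompactSpace K :=
    isCompact_iff_compactSpace.mp ((ContinuousFunctionalCalculus.isCompact_spectrum a).union
      (ContinuousFunctionalCalculus.isCompact_spectrum b))
  let φa := cfcHomOfSubset ha (Set.subset_union_left : _ ⊆ K)
  let φb := cfcHomOfSubset hb (Set.subset_union_right : _ ⊆ K)
  suffices ∀ g : C(K, ℝ), SemiconjBy x (φb g) (φa g) by
    rw [← cfcHomOfSubset_restrict ha _ hf, ← cfcHomOfSubset_restrict hb _ hf]
    exact this _
  intro g
  induction g using ContinuousMap.induction_on_of_compact with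
  | const r =>
    change SemiconjBy x (φb (algebraMap ℝ _ r)) (φa (algebraMap ℝ _ r))
    rw [AlgHomClass.commutes, AlgHomClass.commutes]
    exact (Algebra.commutes r x).symm
  | id => rwa [cfcHomOfSubset_id, cfcHomOfSubset_id]
  | star_id => rwa [star_trivial, cfcHomOfSubset_id, cfcHomOfSubset_id]
  | add f g hf hg => rw [map_add, map_add]; exact hf.add_right hg
  | mul f g hf hg => rw [map_mul, map_mul]; exact hf.mul_right hg
  | frequently f hf =>
    have hφa : Continuous φa := continuous_cfcHomOfSubset ha _
    have hφb : Continuous φb := continuous_cfcHomOfSubset hb _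
    have hclosed : IsClosed {g : C(K, ℝ) | SemiconjBy x (φb g) (φa g)} :=
      isClosed_eq (by fun_prop) (by fun_prop)
    exact hclosed.closure_subset (mem_closure_iff_frequently.mpr hf)

theorem SemiconjBy.eq_zero_of_disjoint_spectrum [IsSemitopologicalRing A] [T2Space A]
    {a b x : A} (ha : IsSelfAdjoint a) (hb : IsSelfAdjoint b) (hx : SemiconjBy x b a)
    (hab : Disjoint (spectrum ℝ a) (spectrum ℝ b)) : x = 0 := by
  obtain ⟨f, hfb, hfa, -⟩ := exists_continuous_zero_one_of_isClosed
    (ContinuousFunctionalCalculus.isCompact_spectrum b).isClosed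
    (ContinuousFunctionalCalculus.isCompact_spectrum a).isClosed hab.symm
  have hfa : cfc f a = 1 := (cfc_congr hfa).trans (cfc_one ℝ a)
  have hfb : cfc f b = 0 := (cfc_congr hfb).trans (cfc_zero ℝ b)
  simpa [hfa, hfb, SemiconjBy] using (hx.cfc_real ha hb f.continuous.continuousOn).symm

end SemiconjBy

lemma add_smul_sq {𝕜 R : Type*} [CommSemiring 𝕜] [Semiring R] [Algebra 𝕜 R] (z : 𝕜)
    (a b : R) :
    (a + z • b) ^ 2 = a ^ 2 + z • (a * b + b * a) + z ^ 2 • b ^ 2 := by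
  simp only [sq, mul_add, add_mul, smul_mul_assoc, mul_smul_comm]
  module

section Cartesian

variable {R : Type*} [Ring R] [StarRing R] [Algebra ℂ R] [StarModule ℂ R]

lemma star_add_I_smul {a b : R} (ha : IsSelfAdjoint a) (hb : IsSelfAdjoint b) :
    star (a + Complex.I • b) = a - Complex.I • b := by
  simp [ha.star_eq, hb.star_eq, sub_eq_add_neg]

lemma mul_add_mul_eq_zero_of_isSelfAdjoint_sq {a b : R} (ha : IsSelfAdjoint a)
    (hb : IsSelfAdjoint b) (h : IsSelfAdjoint ((a + Complex.I • b) ^ 2)) :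
    a * b + b * a = 0 := by
  have h_conj := h.star_eq
  rw [star_pow, star_add_I_smul ha hb, sub_eq_add_neg, ← neg_smul, add_smul_sq,
    add_smul_sq] at h_conj
  have h2 : (2 * Complex.I) • (a * b + b * a) = 0 := by
    linear_combination (norm := module) (-1 : ℂ) • h_conj
  exact (smul_eq_zero.mp h2).resolve_left (by simp)

end Cartesian

open ContinuousLinearMap in
theorem sq_root_selfAdjoint_of_spectrum_re_disjoint
    {H : Type*} [NormedAddCommGroup H] [InnerProductSpace ℂ H] [CompleteSpace H]
    (T A B C : H →L[ℂ] H) (hA : IsSelfAdjoint A) (hB : IsSelfAdjoint B)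
    (hC : IsSelfAdjoint C) (hT : T = A + Complex.I • B) (hsq : T ^ 2 = C)
    (hspec : spectrum ℂ A ∩ spectrum ℂ (-A) = ∅) :
    IsSelfAdjoint T ∧ IsUnit T ∧ T = A := by
  have hanti : SemiconjBy B (-A) A := by
    have := mul_add_mul_eq_zero_of_isSelfAdjoint_sq hA hB (hT ▸ hsq ▸ hC)
    rw [SemiconjBy, mul_neg, neg_eq_iff_add_eq_zero, add_comm, this]
  have hdisj : Disjoint (spectrum ℝ A) (spectrum ℝ (-A)) := by
    rw [← spectrum.preimage_algebraMap ℂ (R := ℝ) (a := A),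
      ← spectrum.preimage_algebraMap ℂ (R := ℝ) (a := -A), Set.disjoint_iff_inter_eq_empty,
      ← Set.preimage_inter, hspec, Set.preimage_empty]
  have hTA : T = A := by
    rw [hT, hanti.eq_zero_of_disjoint_spectrum hA hA.neg hdisj, smul_zero, add_zero]
  have hA0 : (0 : ℂ) ∉ spectrum ℂ A := fun h0 ↦
    hspec.subset ⟨h0, by simpa [← spectrum.neg_eq] using h0⟩
  exact ⟨hTA ▸ hA, hTA ▸ (spectrum.zero_notMem_iff ℂ).mp hA0, hTA⟩
end

section
/- Let A, B be bounded self-adjoint operators on a complex Hilbert space with A positive (A ≥ 0). If AB = -BA, then AB = BA. -/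
set_option synthInstance.maxHeartbeats 1000000
set_option maxHeartbeats 1000000

open scoped ContinuousFunctionalCalculus in
lemma commute_cfc_aux
    {H : Type*} [NormedAddCommGroup H] [InnerProductSpace ℂ H] [CompleteSpace H]
    (a b : H →L[ℂ] H) (ha : IsSelfAdjoint a) (hab : Commute b a) (f : ℝ → ℝ) :
    Commute b (cfc f a) := by
  by_cases hf : ContinuousOn f (spectrum ℝ a)
  · have key : ∀ g : C(spectrum ℝ a, ℝ), Commute b (cfcHom (R := ℝ) ha g) := by
      intro g
      have hS : IsClosed {g : C(spectrum ℝ a, ℝ) | Commute b (cfcHom (R := ℝ) ha g)} := by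
        have hc := (cfcHom_isClosedEmbedding (R := ℝ) ha).continuous
        exact isClosed_eq (continuous_const.mul hc) (hc.mul continuous_const)
      have hX : cfcHom (R := ℝ) ha ((Polynomial.toContinuousMapOnAlgHom (spectrum ℝ a)) Polynomial.X)
          = a := by
        have : (Polynomial.toContinuousMapOnAlgHom (spectrum ℝ a)) Polynomial.X
            = (ContinuousMap.id ℝ).restrict (spectrum ℝ a) := by
          ext x; simp
        rw [this, cfcHom_id ha]
      have hpoly : ∀ g ∈ polynomialFunctions (spectrum ℝ a), Commute b (cfcHom (R := ℝ) ha g) := by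
        intro g hg
        rw [polynomialFunctions.eq_adjoin_X] at hg
        induction hg using Algebra.adjoin_induction with
        | mem x hx =>
          simp only [Set.mem_singleton_iff] at hx
          subst hx
          rw [hX]; exact hab
        | algebraMap r =>
          rw [AlgHomClass.commutes]
          exact (Algebra.commutes r b).symm
        | add x y _ _ hx hy => rw [map_add]; exact hx.add_right hy
        | mul x y _ _ hx hy => rw [map_mul]; exact hx.mul_right hy
      have hmem : g ∈ (polynomialFunctions (spectrum ℝ a)).topologicalClosure := by
        rw [polynomialFunctions.topologicalClosure]; trivial
      exact hS.closure_subset_iff.mpr hpoly hmem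
    rw [cfc_apply f a ha hf]
    exact key _
  · rw [cfc_apply_of_not_continuousOn a hf]
    exact Commute.zero_right b

open ContinuousLinearMap in
theorem commute_of_anticommute_of_nonneg
    {H : Type*} [NormedAddCommGroup H] [InnerProductSpace ℂ H] [CompleteSpace H]
    (A B : H →L[ℂ] H) (hA : IsSelfAdjoint A) (hB : IsSelfAdjoint B)
    (hpos : 0 ≤ A) (h : A * B = -(B * A)) : A * B = B * A := by
  have hBA : B * A = -(A * B) := by rw [h, neg_neg]
  have h2 : Commute B (A * A) := by
    show B * (A * A) = (A * A) * B
    have e1 : B * (A * A) = -(A * B) * A := by rw [← mul_assoc, hBA]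
    have e2 : -(A * B) * A = -(A * (B * A)) := by rw [neg_mul, mul_assoc]
    have e3 : A * (B * A) = -(A * (A * B)) := by rw [hBA, mul_neg]
    rw [e1, e2, e3, neg_neg, ← mul_assoc]
  have hsa2 : IsSelfAdjoint (A * A) := by
    rw [IsSelfAdjoint, star_mul, hA.star_eq]
  have hAA_nonneg : 0 ≤ A * A := by
    have := star_mul_self_nonneg A
    rwa [hA.star_eq] at this
  have hspec : ∀ x ∈ spectrum ℝ (A * A), 0 ≤ x := fun x hx =>
    spectrum_nonneg_of_nonneg hAA_nonneg hx
  set s := cfc Real.sqrt (A * A) with hs_def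
  have hs_nonneg : 0 ≤ s := cfc_nonneg fun x _ => Real.sqrt_nonneg x
  have hss : s * s = A * A := by
    rw [hs_def, ← cfc_mul _ _ (A * A)
      (Real.continuous_sqrt.continuousOn) (Real.continuous_sqrt.continuousOn)]
    calc cfc (fun x => Real.sqrt x * Real.sqrt x) (A * A)
        = cfc (id : ℝ → ℝ) (A * A) :=
          cfc_congr fun x hx => Real.mul_self_sqrt (hspec x hx)
      _ = A * A := cfc_id ℝ (A * A)
  have hAs : A = s := by
    have h1 : CFC.sqrt (A * A) = A := CFC.sqrt_mul_self A hpos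
    have h2' : CFC.sqrt (A * A) = s := CFC.sqrt_unique hss hs_nonneg
    rw [← h1, h2']
  have hcomm : Commute B A := by
    rw [hAs]
    exact commute_cfc_aux (A * A) B hsa2 h2 Real.sqrt
  exact hcomm.eq.symm
end

section
/- Let T be a bounded operator on a complex Hilbert space with T² = 0. If Re T ≥ 0, then T is normal and hence T = 0. -/
set_option synthInstance.maxHeartbeats 1000000
set_option maxHeartbeats 1000000

open scoped InnerProductSpace

open ContinuousLinearMap in
theorem eq_zero_of_sq_eq_zero_of_re_nonneg
    {H : Type*} [NormedAddCommGroup H] [InnerProductSpace ℂ H] [CompleteSpace H]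
    (T : H →L[ℂ] H) (hsq : T ^ 2 = 0)
    (hre : 0 ≤ (2 : ℂ)⁻¹ • (T + ContinuousLinearMap.adjoint T)) :
    IsStarNormal T ∧ T = 0 := by
  set A : H →L[ℂ] H := (2 : ℂ)⁻¹ • (T + ContinuousLinearMap.adjoint T) with hA
  set S : H →L[ℂ] H := CFC.sqrt A with hS
  have hSS : S * S = A := CFC.sqrt_mul_sqrt_self A hre
  have hSsa : IsSelfAdjoint S := IsSelfAdjoint.of_nonneg (CFC.sqrt_nonneg (a := A))
  have hT2 : ∀ x, T (T x) = 0 := by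
    intro x
    have := congrArg (fun f => f x) hsq
    simpa [pow_two] using this
  -- ⟪A (T x), T x⟫ = 0
  have key : ∀ x, S (T x) = 0 := by
    intro x
    have h1 : ⟪A (T x), T x⟫_ℂ = 0 := by
      rw [hA]
      simp only [ContinuousLinearMap.smul_apply, ContinuousLinearMap.add_apply]
      rw [inner_smul_left, inner_add_left, hT2 x, inner_zero_left,
        ContinuousLinearMap.adjoint_inner_left, hT2 x, inner_zero_right]
      simp
    have h2 : ⟪S (T x), S (T x)⟫_ℂ = 0 := by
      calc ⟪S (T x), S (T x)⟫_ℂ = ⟪S (S (T x)), T x⟫_ℂ := by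
            rw [← ContinuousLinearMap.adjoint_inner_left S, hSsa.adjoint_eq]
        _ = ⟪A (T x), T x⟫_ℂ := by
            rw [← hSS]; rfl
        _ = 0 := h1
    exact inner_self_eq_zero.mp h2
  have hAT : ∀ x, A (T x) = 0 := by
    intro x
    have : (S * S) (T x) = 0 := by
      show S (S (T x)) = 0
      rw [key x, map_zero]
    rwa [hSS] at this
  have hTT : ∀ x, ContinuousLinearMap.adjoint T (T x) = 0 := by
    intro x
    have := hAT x
    rw [hA] at this
    simp only [ContinuousLinearMap.smul_apply, ContinuousLinearMap.add_apply, hT2 x,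
      zero_add, smul_eq_zero] at this
    rcases this with h | h
    · norm_num at h
    · exact h
  have hT0 : T = 0 := by
    ext x
    have : ⟪T x, T x⟫_ℂ = 0 := by
      rw [← ContinuousLinearMap.adjoint_inner_left, hTT x, inner_zero_left]
    simpa using inner_self_eq_zero.mp this
  subst hT0
  exact ⟨by infer_instance, rfl⟩
end

section
/- Let T be a bounded operator on a complex Hilbert space with T² = 0. If Im T ≥ 0, then T is normal and hence T = 0. -/
/-!
Write `A = (T - T†)/(2i)`. If `T y = 0`, then `⟪A y, y⟫` is a multiple of `⟪T† y, y⟫ = ⟪y, T y⟫ = 0`;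
a positive operator `A = B†B` vanishes wherever its quadratic form `‖B y‖²` does, so `A y = 0`,
i.e. `T† y = 0`. Since `T² = 0`, every `T x` lies in `ker T`, hence `T† T = 0` and `T = 0`.
-/

open scoped InnerProductSpace

namespace ContinuousLinearMap

variable {H : Type*} [NormedAddCommGroup H] [InnerProductSpace ℂ H] [CompleteSpace H]

theorem apply_eq_zero_of_nonneg_of_inner_self_eq_zero {A : H →L[ℂ] H} (hA : 0 ≤ A) {x : H}
    (h : ⟪A x, x⟫_ℂ = 0) : A x = 0 := by
  obtain ⟨B, rfl⟩ := CStarAlgebra.nonneg_iff_eq_star_mul_self.mp hA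
  have hBx : B x = 0 := by
    rw [star_eq_adjoint, mul_apply_eq_comp, adjoint_inner_left] at h
    exact inner_self_eq_zero.mp h
  rw [mul_apply_eq_comp, hBx, map_zero]

theorem adjoint_apply_eq_zero_of_apply_eq_zero_of_im_nonneg {T : H →L[ℂ] H}
    (him : 0 ≤ (2 * Complex.I)⁻¹ • (T - adjoint T)) {y : H} (hy : T y = 0) :
    adjoint T y = 0 := by
  have hAy : ((2 * Complex.I)⁻¹ • (T - adjoint T)) y = -((2 * Complex.I)⁻¹ • adjoint T y) := by
    simp [hy]
  have hform : ⟪((2 * Complex.I)⁻¹ • (T - adjoint T)) y, y⟫_ℂ = 0 := by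
    rw [hAy, inner_neg_left, inner_smul_left, adjoint_inner_left, hy, inner_zero_right,
      mul_zero, neg_zero]
  have hAy0 := apply_eq_zero_of_nonneg_of_inner_self_eq_zero him hform
  rw [hAy, neg_eq_zero, smul_eq_zero] at hAy0
  exact hAy0.resolve_left (by simp [Complex.I_ne_zero])

end ContinuousLinearMap

open ContinuousLinearMap in
theorem eq_zero_of_sq_eq_zero_of_im_nonneg
    {H : Type*} [NormedAddCommGroup H] [InnerProductSpace ℂ H] [CompleteSpace H]
    (T : H →L[ℂ] H) (hsq : T ^ 2 = 0)
    (him : 0 ≤ (2 * Complex.I)⁻¹ • (T - ContinuousLinearMap.adjoint T)) :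
    IsStarNormal T ∧ T = 0 := by
  have hT : T = 0 := by
    rw [← adjoint_comp_self_eq_zero_iff]
    ext x
    have hTTx : T (T x) = 0 := by simpa [pow_two] using congr($hsq x)
    exact adjoint_apply_eq_zero_of_apply_eq_zero_of_im_nonneg him hTTx
  subst hT
  exact ⟨inferInstance, rfl⟩
end

section
/- Let T be a bounded operator on a complex Hilbert space with T² = 0. If σ(Re T) ⊆ [0,∞) or σ(Re T) ⊆ (-∞,0] or σ(Im T) ⊆ [0,∞) or σ(Im T) ⊆ (-∞,0], then T = 0. -/
/-!
If `T ^ 2 = 0`, then along the line `x = T y + t • y` we have `T x = t • T y`, so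
`re ⟪T x, x⟫ = t ‖T y‖² + t² re ⟪T y, y⟫`. A quadratic in `t` without constant term keeps a sign
only if its linear coefficient vanishes, so `0 ≤ ℜ T` forces `T y = 0`.
Multiplying `T` by `-1` or `±I` turns each of the other three spectral conditions into this one.
-/

open ComplexStarModule

open RCLike in
theorem LinearMap.eq_zero_of_sq_eq_zero_of_re_inner_nonneg {𝕜 E : Type*} [RCLike 𝕜]
    [NormedAddCommGroup E] [InnerProductSpace 𝕜 E] {T : E →ₗ[𝕜] E} (hT : T ^ 2 = 0)
    (h : ∀ x, 0 ≤ re (inner 𝕜 (T x) x)) : T = 0 := by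
  ext y
  have hTT : T (T y) = 0 := by simpa [sq] using congr($hT y)
  have hquad : ∀ t : ℝ, 0 ≤ re (inner 𝕜 (T y) y) * (t * t) + ‖T y‖ ^ 2 * t + 0 := by
    intro t
    have hx := h (T y + (t : 𝕜) • y)
    simp only [map_add, map_smul, hTT, zero_add, inner_smul_left, inner_add_right,
      inner_smul_right, inner_self_eq_norm_sq_to_K] at hx
    simp only [conj_ofReal, ← mul_assoc, ← ofReal_mul, ← ofReal_pow, re_ofReal_mul,
      ofReal_re] at hx
    linarith
  simpa [discrim] using discrim_le_zero hquad

section StarModule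

variable {A : Type*} [AddCommGroup A] [Module ℂ A] [StarAddMonoid A] [StarModule ℂ A]

theorem coe_realPart_eq_two_inv_smul_add_star (a : A) :
    (ℜ a : A) = (2 : ℂ)⁻¹ • (a + star a) := by
  rw [realPart_apply_coe, ← Complex.coe_smul]
  norm_num

theorem coe_imaginaryPart_eq_two_mul_I_inv_smul_sub_star (a : A) :
    (ℑ a : A) = (2 * Complex.I)⁻¹ • (a - star a) := by
  rw [imaginaryPart_apply_coe, ← Complex.coe_smul, smul_smul]
  congr 1
  field_simp
  simp

end StarModule

theorem StarOrderedRing.nonpos_iff_spectrum_nonpos {A : Type*} [CStarAlgebra A] [PartialOrder A]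
    [StarOrderedRing A] {a : A} (ha : IsSelfAdjoint a) : a ≤ 0 ↔ ∀ x ∈ spectrum ℝ a, x ≤ 0 := by
  simpa [cfc_id ℝ a ha] using cfc_nonpos_iff (R := ℝ) id a

namespace ContinuousLinearMap

variable {H : Type*} [NormedAddCommGroup H] [InnerProductSpace ℂ H] [CompleteSpace H]

theorem re_inner_realPart_apply (T : H →L[ℂ] H) (x : H) :
    (inner ℂ ((ℜ T : H →L[ℂ] H) x) x).re = (inner ℂ (T x) x).re := by
  have hsymm : (inner ℂ x (T x)).re = (inner ℂ (T x) x).re := inner_re_symm (𝕜 := ℂ) _ _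
  rw [realPart_apply_coe, star_eq_adjoint, ← Complex.coe_smul, smul_apply, add_apply,
    inner_smul_left, Complex.conj_ofReal, Complex.re_ofReal_mul, inner_add_left, adjoint_inner_left,
    Complex.add_re, hsymm]
  ring

theorem eq_zero_of_sq_eq_zero_of_realPart_nonneg {T : H →L[ℂ] H} (hT : T ^ 2 = 0)
    (h : 0 ≤ (ℜ T : H →L[ℂ] H)) : T = 0 := by
  have hpos := (nonneg_iff_isPositive _).mp h
  refine coe_injective (LinearMap.eq_zero_of_sq_eq_zero_of_re_inner_nonneg ?_ fun x ↦ ?_)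
  · rw [← toLinearMap_pow, hT, toLinearMap_zero]
  · simpa [re_inner_realPart_apply] using hpos.re_inner_nonneg_left x

end ContinuousLinearMap

open ContinuousLinearMap in
theorem eq_zero_of_sq_eq_zero_of_spectrum_semidefinite
    {H : Type*} [NormedAddCommGroup H] [InnerProductSpace ℂ H] [CompleteSpace H]
    (T : H →L[ℂ] H) (hsq : T ^ 2 = 0)
    (h : spectrum ℝ ((2 : ℂ)⁻¹ • (T + ContinuousLinearMap.adjoint T)) ⊆ Set.Ici 0 ∨
         spectrum ℝ ((2 : ℂ)⁻¹ • (T + ContinuousLinearMap.adjoint T)) ⊆ Set.Iic 0 ∨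
         spectrum ℝ ((2 * Complex.I)⁻¹ • (T - ContinuousLinearMap.adjoint T)) ⊆ Set.Ici 0 ∨
         spectrum ℝ ((2 * Complex.I)⁻¹ • (T - ContinuousLinearMap.adjoint T)) ⊆ Set.Iic 0) :
    T = 0 := by
  simp only [← star_eq_adjoint, ← coe_realPart_eq_two_inv_smul_add_star,
    ← coe_imaginaryPart_eq_two_mul_I_inv_smul_sub_star] at h
  suffices ∃ c : ℂ, c ≠ 0 ∧ 0 ≤ (ℜ (c • T) : H →L[ℂ] H) by
    obtain ⟨c, hc, hpos⟩ := this
    refine (smul_eq_zero_iff_right hc).mp (eq_zero_of_sq_eq_zero_of_realPart_nonneg ?_ hpos)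
    rw [smul_pow, hsq, smul_zero]
  rcases h with h | h | h | h
  · refine ⟨1, one_ne_zero, ?_⟩
    simpa using (StarOrderedRing.nonneg_iff_spectrum_nonneg (R := ℝ) _).mpr h
  · refine ⟨-1, by norm_num, ?_⟩
    simpa using (StarOrderedRing.nonpos_iff_spectrum_nonpos (ℜ T).2).mpr h
  · refine ⟨-Complex.I, by simp, ?_⟩
    simpa [neg_smul] using (StarOrderedRing.nonneg_iff_spectrum_nonneg (R := ℝ) _).mpr h
  · refine ⟨Complex.I, Complex.I_ne_zero, ?_⟩
    rw [realPart_I_smul, NegMemClass.coe_neg, neg_nonneg]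
    exact (StarOrderedRing.nonpos_iff_spectrum_nonpos (ℑ T).2).mpr h
end

section
/- Let T = A + iB and S = C + iD be bounded operators on a complex Hilbert space with A, B, C, D self-adjoint and T² = S. If A ≥ 0 (or A ≤ 0), then T is normal if and only if AD = DA. -/
/-!
Write `T = A + iB`. Then `T` is normal iff `A` and `B` commute, and comparing imaginary parts in
`T² = S` gives `D = AB + BA`, so `AD - DA = A²B - BA²`. Hence `A` commutes with `D` iff `A²`
commutes with `B`. When `±A ≥ 0`, `±A` is the positive square root of `A²` and thus a continuous
function of `A²`, so it commutes with everything that commutes with `A²`.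
-/

open Complex ComplexStarModule

lemma add_I_smul_sq {R : Type*} [Ring R] [Algebra ℂ R] (a b : R) :
    (a + I • b) ^ 2 = (a * a - b * b) + I • (a * b + b * a) := by
  simp only [sq, mul_add, add_mul, smul_mul_assoc, mul_smul_comm, smul_smul, I_mul_I, neg_one_smul,
    smul_add]
  abel

section CartesianDecomposition

variable {A : Type*} [Ring A] [StarRing A] [Algebra ℂ A] [StarModule ℂ A] {a b : A}

lemma realPart_add_I_smul (ha : IsSelfAdjoint a) (hb : IsSelfAdjoint b) :
    (ℜ (a + I • b) : A) = a := by
  simp [ha.coe_realPart, hb.imaginaryPart]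

lemma imaginaryPart_add_I_smul (ha : IsSelfAdjoint a) (hb : IsSelfAdjoint b) :
    (ℑ (a + I • b) : A) = b := by
  simp [ha.imaginaryPart, hb.coe_realPart]

lemma isStarNormal_add_I_smul_iff (ha : IsSelfAdjoint a) (hb : IsSelfAdjoint b) :
    IsStarNormal (a + I • b) ↔ Commute a b := by
  rw [isStarNormal_iff_commute_realPart_imaginaryPart, realPart_add_I_smul ha hb,
    imaginaryPart_add_I_smul ha hb]

lemma imaginaryPart_add_I_smul_sq (ha : IsSelfAdjoint a) (hb : IsSelfAdjoint b) :
    (ℑ ((a + I • b) ^ 2) : A) = a * b + b * a := by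
  have hsq : IsSelfAdjoint (a * a - b * b) := by
    simpa [sq] using (ha.pow 2).sub (hb.pow 2)
  have hanti : IsSelfAdjoint (a * b + b * a) := by
    simp [IsSelfAdjoint, ha.star_eq, hb.star_eq, add_comm]
  rw [add_I_smul_sq, imaginaryPart_add_I_smul hsq hanti]

end CartesianDecomposition

lemma commute_mul_add_mul_iff_commute_sq {R : Type*} [Ring R] {a b : R} :
    Commute a (a * b + b * a) ↔ Commute (a ^ 2) b := by
  simp only [commute_iff_eq, mul_add, add_mul, sq, ← mul_assoc]
  rw [add_comm (a * b * a)]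
  exact add_left_inj _

section SquareRoot

variable {A : Type*} [PartialOrder A] [Ring A] [StarRing A] [TopologicalSpace A]
  [IsTopologicalRing A] [T2Space A] [StarOrderedRing A] [Algebra ℝ A]
  [ContinuousFunctionalCalculus ℝ A IsSelfAdjoint] [NonnegSpectrumClass ℝ A] {a b : A}

lemma Commute.of_sq_left_of_nonneg (ha : 0 ≤ a) (h : Commute (a ^ 2) b) : Commute a b := by
  simpa [← CFC.sqrt_eq_cfc, CFC.sqrt_sq a ha] using h.cfc_nnreal NNReal.sqrt

lemma Commute.of_sq_left_of_nonneg_or_nonpos (ha : 0 ≤ a ∨ a ≤ 0) (h : Commute (a ^ 2) b) :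
    Commute a b := by
  rcases ha with ha | ha
  · exact h.of_sq_left_of_nonneg ha
  · exact Commute.neg_left_iff.mp <| .of_sq_left_of_nonneg (neg_nonneg.mpr ha) (by rwa [neg_sq])

end SquareRoot

open ContinuousLinearMap in
theorem normal_iff_AD_comm_of_semidefinite
    {H : Type*} [NormedAddCommGroup H] [InnerProductSpace ℂ H] [CompleteSpace H]
    (T S A B C D : H →L[ℂ] H) (hA : IsSelfAdjoint A) (hB : IsSelfAdjoint B)
    (hC : IsSelfAdjoint C) (hD : IsSelfAdjoint D)
    (hT : T = A + Complex.I • B) (hS : S = C + Complex.I • D) (hsq : T ^ 2 = S)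
    (hsemi : 0 ≤ A ∨ A ≤ 0) :
    IsStarNormal T ↔ A * D = D * A := by
  have hD_eq : D = A * B + B * A := by
    rw [← imaginaryPart_add_I_smul hC hD, ← hS, ← hsq, hT, imaginaryPart_add_I_smul_sq hA hB]
  rw [hT, isStarNormal_add_I_smul_iff hA hB, hD_eq, ← commute_iff_eq,
    commute_mul_add_mul_iff_commute_sq]
  exact ⟨Commute.pow_left (n := 2), Commute.of_sq_left_of_nonneg_or_nonpos hsemi⟩
end

section
/- Let T = A + iB be a bounded operator on a complex Hilbert space with T² = S self-adjoint. If A ≥ 0 or A ≤ 0 or B ≥ 0 or B ≤ 0, then T is normal. -/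
/-!
Write `T = A + iB`. Since `T* = A - iB`, the identity `(T*)² = T²` says exactly that `A` and `B`
anticommute, `AB = -BA`. Then `A²` commutes with `B`, and if `±A ≥ 0` then `±A` is the
continuous functional calculus square root of `A²`, so `A` commutes with `B` as well; the same
argument works with the roles of `A` and `B` exchanged. Finally `T` is normal iff `AB = BA`.
-/

open Complex

section CartesianDecomposition

variable {R : Type*} [Ring R] [StarRing R] [Algebra ℂ R] [StarModule ℂ R] {x y : R}

lemma star_add_I_smul_s11 (hx : IsSelfAdjoint x) (hy : IsSelfAdjoint y) :
    star (x + I • y) = x - I • y := by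
  rw [star_add, star_smul, hx.star_eq, hy.star_eq, star_def, conj_I, neg_smul, sub_eq_add_neg]

lemma mul_add_mul_eq_zero_of_isSelfAdjoint_sq_s11 (hx : IsSelfAdjoint x) (hy : IsSelfAdjoint y)
    (h : IsSelfAdjoint ((x + I • y) ^ 2)) : x * y + y * x = 0 := by
  have hsq : (x - I • y) ^ 2 = (x + I • y) ^ 2 := by
    rw [← star_add_I_smul_s11 hx hy, ← star_pow, h.star_eq]
  have hdiff : (x + I • y) ^ 2 - (x - I • y) ^ 2 = (2 * I) • (x * y + y * x) := by
    simp only [sq, mul_add, add_mul, mul_sub, sub_mul, smul_mul_assoc, mul_smul_comm]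
    module
  rw [hsq, sub_self, eq_comm] at hdiff
  exact (smul_eq_zero_iff_right (by simp [I_ne_zero])).mp hdiff

lemma isStarNormal_add_I_smul (hx : IsSelfAdjoint x) (hy : IsSelfAdjoint y) (h : Commute x y) :
    IsStarNormal (x + I • y) := by
  refine ⟨?_⟩
  rw [commute_iff_eq, star_add_I_smul_s11 hx hy]
  simp only [mul_add, add_mul, mul_sub, sub_mul, smul_mul_assoc, mul_smul_comm, h.eq]
  module

end CartesianDecomposition

section Anticommute

variable {A : Type*} [CStarAlgebra A] [PartialOrder A] [StarOrderedRing A] {a b : A}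

lemma Commute.of_mul_self_of_nonneg (ha : 0 ≤ a) (h : Commute (a * a) b) : Commute a b := by
  rw [← CFC.sqrt_mul_self a ha, CFC.sqrt_eq_cfc]
  exact h.cfc_nnreal _

lemma commute_of_nonneg_of_mul_add_mul_eq_zero (ha : 0 ≤ a) (h : a * b + b * a = 0) :
    Commute a b := by
  have hab : a * b = -(b * a) := eq_neg_of_add_eq_zero_left h
  refine Commute.of_mul_self_of_nonneg ha ?_
  calc a * a * b = -(a * b * a) := by rw [mul_assoc, hab, mul_neg, ← mul_assoc, hab]
    _ = b * (a * a) := by rw [hab, neg_mul, neg_neg, mul_assoc]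

lemma commute_of_nonpos_of_mul_add_mul_eq_zero (ha : a ≤ 0) (h : a * b + b * a = 0) :
    Commute a b := by
  refine Commute.neg_left_iff.mp (commute_of_nonneg_of_mul_add_mul_eq_zero (neg_nonneg.mpr ha) ?_)
  rw [neg_mul, mul_neg, ← neg_add, h, neg_zero]

end Anticommute

open ContinuousLinearMap in
theorem normal_of_sq_selfAdjoint_of_semidefinite
    {H : Type*} [NormedAddCommGroup H] [InnerProductSpace ℂ H] [CompleteSpace H]
    (T S A B : H →L[ℂ] H) (hA : IsSelfAdjoint A) (hB : IsSelfAdjoint B)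
    (hT : T = A + Complex.I • B) (hsq : T ^ 2 = S) (hS : IsSelfAdjoint S)
    (hsemi : 0 ≤ A ∨ A ≤ 0 ∨ 0 ≤ B ∨ B ≤ 0) :
    IsStarNormal T := by
  subst hT
  have hAB : A * B + B * A = 0 := mul_add_mul_eq_zero_of_isSelfAdjoint_sq_s11 hA hB (hsq ▸ hS)
  have hBA : B * A + A * B = 0 := by rwa [add_comm]
  have hcomm : Commute A B := by
    rcases hsemi with h | h | h | h
    · exact commute_of_nonneg_of_mul_add_mul_eq_zero h hAB
    · exact commute_of_nonpos_of_mul_add_mul_eq_zero h hAB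
    · exact (commute_of_nonneg_of_mul_add_mul_eq_zero h hBA).symm
    · exact (commute_of_nonpos_of_mul_add_mul_eq_zero h hBA).symm
  exact isStarNormal_add_I_smul hA hB hcomm
end

section
/- Let N = C + iD be a bounded normal operator on a complex Hilbert space with D ≤ 0. Then T = ((|N|+C)/2)^{1/2} - i((|N|-C)/2)^{1/2} is a normal operator satisfying T² = N. -/
/-!
Since `N` is normal, all the operators involved are continuous functions of `N`: `|N|`, `C = ℜ N`
and `D = ℑ N` correspond to `z ↦ ‖z‖`, `re z` and `im z`, and the two square roots to
`z ↦ √((‖z‖ ± re z) / 2)`. Hence `T = f(N)` for `f z = √((‖z‖ + re z) / 2) - i √((‖z‖ - re z) / 2)`,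
which is normal as a function of `N`. Pointwise `f z ^ 2 = z` whenever `im z ≤ 0`, and `D ≤ 0`
says exactly that the spectrum of `N` lies in that half-plane, so `T ^ 2 = N`.
-/

open Complex ComplexStarModule ComplexOrder

section RealImaginaryPart

variable {A : Type*} [AddCommGroup A] [Module ℂ A] [StarAddMonoid A] [StarModule ℂ A]

lemma realPart_add_I_smul_s14 {c d : A} (hc : IsSelfAdjoint c) (hd : IsSelfAdjoint d) :
    (ℜ (c + I • d) : A) = c := by
  simp [realPart_I_smul, hc.coe_realPart, hd.imaginaryPart]

lemma imaginaryPart_add_I_smul_s14 {c d : A} (hc : IsSelfAdjoint c) (hd : IsSelfAdjoint d) :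
    (ℑ (c + I • d) : A) = d := by
  simp [imaginaryPart_I_smul, hc.imaginaryPart, hd.coe_realPart]

end RealImaginaryPart

namespace Complex

noncomputable def lowerSqrt (z : ℂ) : ℂ := √((‖z‖ + z.re) / 2) - I * √((‖z‖ - z.re) / 2)

@[fun_prop]
lemma continuous_lowerSqrt : Continuous lowerSqrt := by
  unfold lowerSqrt
  fun_prop

lemma lowerSqrt_sq {z : ℂ} (hz : z.im ≤ 0) : lowerSqrt z ^ 2 = z := by
  have hre := abs_le.mp (abs_re_le_norm z)
  set a := √((‖z‖ + z.re) / 2)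
  set b := √((‖z‖ - z.re) / 2)
  have ha : a ^ 2 = (‖z‖ + z.re) / 2 := Real.sq_sqrt (by linarith)
  have hb : b ^ 2 = (‖z‖ - z.re) / 2 := Real.sq_sqrt (by linarith)
  -- the sign condition on `z.im` is what makes `a * b = -z.im / 2` rather than `|z.im| / 2`
  have hab : a * b = -z.im / 2 := by
    rw [← Real.sqrt_mul (by linarith), ← Real.sqrt_sq (by linarith : 0 ≤ -z.im / 2)]
    congr 1
    linear_combination (Complex.sq_norm z).trans (normSq_apply z) / 4
  calc lowerSqrt z ^ 2 = ((a ^ 2 - b ^ 2 : ℝ) : ℂ) + ((-2 * (a * b) : ℝ) : ℂ) * I := by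
        simp only [lowerSqrt]
        push_cast
        linear_combination (b : ℂ) ^ 2 * I_sq
    _ = z := by
        rw [ha, hb, hab]
        convert re_add_im z using 3 <;> push_cast <;> ring

end Complex

section CStarAlgebra

variable {A : Type*} [CStarAlgebra A]

lemma cfc_lowerSqrt_sq (a : A) [IsStarNormal a] (ha : ∀ z ∈ spectrum ℂ a, z.im ≤ 0) :
    cfc lowerSqrt a ^ 2 = a := by
  rw [← cfc_pow .., cfc_congr fun z hz => lowerSqrt_sq (ha z hz), cfc_id' ℂ a]

variable [PartialOrder A] [StarOrderedRing A]

lemma im_nonpos_of_imaginaryPart_nonpos {a : A} [IsStarNormal a] (ha : (ℑ a : A) ≤ 0) {z : ℂ}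
    (hz : z ∈ spectrum ℂ a) : z.im ≤ 0 := by
  rw [← cfc_im_id a, cfc_nonpos_iff _ a] at ha
  exact_mod_cast ha z hz

namespace CFC

lemma sqrt_cfc_ofReal (a : A) (f : ℂ → ℝ) (hf : ContinuousOn f (spectrum ℂ a))
    (hf0 : ∀ z ∈ spectrum ℂ a, 0 ≤ f z) :
    sqrt (cfc (fun z => (f z : ℂ)) a) = cfc (fun z => (√(f z) : ℂ)) a := by
  refine sqrt_unique ?_ (cfc_nonneg fun z _ => by positivity)
  rw [← cfc_mul ..]
  refine cfc_congr fun z hz => ?_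
  rw [← ofReal_mul, Real.mul_self_sqrt (hf0 z hz)]

variable (a : A) [IsStarNormal a]

lemma sqrt_half_abs_add_realPart :
    sqrt ((2 : ℂ)⁻¹ • (abs a + ℜ a)) = cfc (fun z => (√((‖z‖ + z.re) / 2) : ℂ)) a := by
  have hcfc : (2 : ℂ)⁻¹ • (abs a + ℜ a) = cfc (fun z => (((‖z‖ + z.re) / 2 : ℝ) : ℂ)) a := by
    rw [abs_eq_cfcₙ_coe_norm ℂ a, cfcₙ_eq_cfc, ← cfc_re_id a, ← cfc_add .., ← cfc_smul ..]
    refine cfc_congr fun z _ => ?_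
    simp only [smul_eq_mul, RCLike.ofReal_eq_complex_ofReal]
    push_cast
    ring
  rw [hcfc, sqrt_cfc_ofReal a _ (by fun_prop)]
  exact fun z _ => by linarith [abs_le.mp (abs_re_le_norm z)]

lemma sqrt_half_abs_sub_realPart :
    sqrt ((2 : ℂ)⁻¹ • (abs a - ℜ a)) = cfc (fun z => (√((‖z‖ - z.re) / 2) : ℂ)) a := by
  rw [sub_eq_add_neg, ← abs_neg, ← NegMemClass.coe_neg, ← map_neg, sqrt_half_abs_add_realPart,
    ← cfc_comp_neg ..]
  simp [sub_eq_add_neg]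

end CFC

lemma cfc_lowerSqrt (a : A) [IsStarNormal a] :
    cfc lowerSqrt a =
      CFC.sqrt ((2 : ℂ)⁻¹ • (CFC.abs a + ℜ a)) - I • CFC.sqrt ((2 : ℂ)⁻¹ • (CFC.abs a - ℜ a)) := by
  rw [CFC.sqrt_half_abs_add_realPart, CFC.sqrt_half_abs_sub_realPart, ← cfc_const_mul ..,
    ← cfc_sub ..]
  rfl

end CStarAlgebra

open ContinuousLinearMap in
theorem normal_sqrt_of_im_nonpos
    {H : Type*} [NormedAddCommGroup H] [InnerProductSpace ℂ H] [CompleteSpace H]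
    (N C D : H →L[ℂ] H) (hC : IsSelfAdjoint C) (hD : IsSelfAdjoint D)
    (hN : N = C + Complex.I • D) (hnormal : IsStarNormal N) (hD0 : D ≤ 0) :
    IsStarNormal (CFC.sqrt ((2 : ℂ)⁻¹ • (CFC.sqrt (star N * N) + C)) -
        Complex.I • CFC.sqrt ((2 : ℂ)⁻¹ • (CFC.sqrt (star N * N) - C))) ∧
    (CFC.sqrt ((2 : ℂ)⁻¹ • (CFC.sqrt (star N * N) + C)) -
        Complex.I • CFC.sqrt ((2 : ℂ)⁻¹ • (CFC.sqrt (star N * N) - C))) ^ 2 = N := by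
  have hre : (ℜ N : H →L[ℂ] H) = C := hN ▸ realPart_add_I_smul_s14 hC hD
  have him : (ℑ N : H →L[ℂ] H) = D := hN ▸ imaginaryPart_add_I_smul_s14 hC hD
  have hT := cfc_lowerSqrt N
  rw [hre, CFC.abs] at hT
  rw [← hT]
  exact ⟨inferInstance, cfc_lowerSqrt_sq N fun z => im_nonpos_of_imaginaryPart_nonpos (him ▸ hD0)⟩
end
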